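/- Let T be a tree (a finite connected acyclic graph) and let f be a divisor on T with deg(f) ≥ 0. Then ρ(f) = deg(f). -/

import Mathlib

/-- A finite loopless multigraph on vertex set `V`, given by its symmetric
edge-multiplicity function `e`. -/
structure Multigraph (V : Type*) [Fintype V] [DecidableEq V] where
  e : V → V → ℕ
  symm : ∀ u v, e u v = e v u
  loopless : ∀ v, e v v = 0

namespace Multigraph

variable {V : Type*} [Fintype V] [DecidableEq V]

/-- The degree of a vertex of a multigraph. -/
def vdeg (G : Multigraph V) (v : V) : ℕ := ∑ u, G.e v u

/-- The number of edges of a multigraph. -/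
def edgeCount (G : Multigraph V) : ℕ := (∑ u, ∑ v, G.e u v) / 2

/-- The underlying simple graph (adjacency) of a multigraph. -/
def toSimple (G : Multigraph V) : SimpleGraph V where
  Adj u v := G.e u v ≠ 0
  symm := ⟨by intro u v h; rwa [G.symm]⟩
  loopless := ⟨by intro v h; exact h (G.loopless v)⟩

/-- A multigraph is connected if its underlying simple graph is. -/
def Connected (G : Multigraph V) : Prop := G.toSimple.Connected

/-- The degree of a divisor `f : V → ℤ`. -/
def degree (f : V → ℤ) : ℤ := ∑ v, f v

/-- A divisor is effective if all its values are nonnegative. -/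
def Effective (f : V → ℤ) : Prop := ∀ v, 0 ≤ f v

/-- The divisor `x · Δ_G`, where `Δ_G` is the Laplacian matrix of `G`. -/
def lapApply (G : Multigraph V) (x : V → ℤ) : V → ℤ :=
  fun v => x v * (G.vdeg v : ℤ) - ∑ u, x u * (G.e u v : ℤ)

/-- Linear equivalence of divisors: `g = f + x Δ_G` for some `x : V → ℤ`. -/
def LinEquiv (G : Multigraph V) (f g : V → ℤ) : Prop :=
  ∃ x : V → ℤ, g = f + G.lapApply x

/-- A divisor is L-effective if it is linearly equivalent to an effective divisor. -/
def LEffective (G : Multigraph V) (f : V → ℤ) : Prop :=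
  ∃ g : V → ℤ, G.LinEquiv f g ∧ Effective g

/-- The Baker–Norine rank of a divisor: `-1` if `f` is not L-effective, and
otherwise the largest `r ≥ 0` such that `f - λ` is L-effective for every
effective divisor `λ` of degree `r`. -/
noncomputable def rank (G : Multigraph V) (f : V → ℤ) : ℤ :=
  sSup ({-1} ∪ {r : ℤ | 0 ≤ r ∧
    ∀ l : V → ℤ, Effective l → degree l = r → G.LEffective (f - l)})

/-- The divisor `ε_v`. -/
def epsDiv (v : V) : V → ℤ := fun u => if u = v then 1 else 0

/-- A tree: a connected acyclic (multi)graph. -/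
def IsTree (G : Multigraph V) : Prop :=
  G.toSimple.IsTree ∧ ∀ u v, G.e u v ≤ 1

/-- A cycle graph: connected, and every vertex has degree 2. -/
def IsCycleGraph (G : Multigraph V) : Prop :=
  G.Connected ∧ ∀ v, G.vdeg v = 2

/-- An edge: two vertices joined by a single edge. -/
def IsEdgeGraph (G : Multigraph V) : Prop :=
  Fintype.card V = 2 ∧ G.Connected ∧ ∀ u v, G.e u v ≤ 1

/-- A good divisor (on a cycle): degree `0` and linearly equivalent to `0`. -/
def Good (G : Multigraph V) (f : V → ℤ) : Prop :=
  degree f = 0 ∧ G.LinEquiv f 0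

/-- A bad divisor (on a cycle): degree `0` and not linearly equivalent to `0`. -/
def Bad (G : Multigraph V) (f : V → ℤ) : Prop :=
  degree f = 0 ∧ ¬ G.LinEquiv f 0

/-- The induced sub-multigraph on a finite set `S` of vertices. -/
def induce (G : Multigraph V) (S : Finset V) : Multigraph {x // x ∈ S} where
  e a b := G.e a.1 b.1
  symm := fun a b => G.symm a.1 b.1
  loopless := fun a => G.loopless a.1

/-- `v` decomposes the induced subgraph of `G` on `S` into the induced
subgraphs on `V1` and `U`: they cover `S`, meet exactly in `v`, are both
connected, and there is no edge between `V1 \ {v}` and `U \ {v}`. -/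
def DecompOn (G : Multigraph V) (S : Finset V) (v : V) (V1 U : Finset V) : Prop :=
  V1 ∪ U = S ∧ V1 ∩ U = {v} ∧
  (G.induce V1).Connected ∧ (G.induce U).Connected ∧
  ∀ a ∈ V1, ∀ b ∈ U, a ≠ v → b ≠ v → G.e a b = 0

/-- `v` decomposes `G` into the induced subgraphs on `V1` and `U`. -/
def Decomp (G : Multigraph V) (v : V) (V1 U : Finset V) : Prop :=
  G.DecompOn Finset.univ v V1 U

/-- The contraction `f_{G/H}` of a divisor `f`, where `H = G(U)` and
`G/H = G(V1)`, the cut vertex being `v`. -/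
def contractDiv (f : V → ℤ) (v : V) (V1 U : Finset V) : {x // x ∈ V1} → ℤ :=
  fun u => if u.1 = v then ∑ w ∈ U, f w else f u.1

/-- The zero `f_{N(H)}` of a divisor `f`, where `H = G(U)`, the cut vertex
being `v`. -/
def zeroDiv (f : V → ℤ) (v : V) (U : Finset V) : {x // x ∈ U} → ℤ :=
  fun u => if u.1 = v then - ∑ w ∈ U.erase v, f w else f u.1

/-- `ε_v` as a divisor on an induced subgraph. -/
def epsDivOn (S : Finset V) (v : V) : {x // x ∈ S} → ℤ :=
  fun u => if u.1 = v then 1 else 0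

/-- A simple cycle of `G`, given as a sub-multigraph (an edge-multiplicity
function bounded by that of `G`) which is connected on its support and in
which every vertex of its (nonempty) support has degree 2. -/
def IsCycleSubgraph (G : Multigraph V) (h : V → V → ℕ) : Prop :=
  (∀ u v, h u v ≤ G.e u v) ∧ (∀ u v, h u v = h v u) ∧
  (∀ v, (∑ u, h v u = 0) ∨ (∑ u, h v u = 2)) ∧
  (∃ v, ∑ u, h v u ≠ 0) ∧
  (∀ v w, (∑ u, h v u ≠ 0) → (∑ u, h w u ≠ 0) →
    Relation.ReflTransGen (fun a b => h a b ≠ 0) v w)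

/-- The vertex support of a sub-multigraph. -/
def cycleSupport (h : V → V → ℕ) : Finset V :=
  Finset.univ.filter (fun v => ∑ u, h v u ≠ 0)

/-- A cactus: a connected multigraph in which any two distinct simple cycles
have at most one vertex in common (in particular every edge has multiplicity
at most 2, since parallel edges form 2-cycles). -/
def IsCactus (G : Multigraph V) : Prop :=
  G.Connected ∧ (∀ u v, G.e u v ≤ 2) ∧
  ∀ h₁ h₂ : V → V → ℕ, G.IsCycleSubgraph h₁ → G.IsCycleSubgraph h₂ → h₁ ≠ h₂ →
    (cycleSupport h₁ ∩ cycleSupport h₂).card ≤ 1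

/-- One step of a block elimination scheme: `G(S')` is obtained from `G(S)`
by contracting a free block (an edge or a cycle) `G(U)` at the vertex `v`. -/
def BlockStep (G : Multigraph V) (S S' : Finset V) : Prop :=
  ∃ (v : V) (U : Finset V), G.DecompOn S v S' U ∧
    ((G.induce U).IsEdgeGraph ∨ (G.induce U).IsCycleGraph)

/-- A block elimination scheme: a sequence of contractions of free blocks,
starting from `G` and ending at a single vertex. -/
def HasBlockEliminationScheme (G : Multigraph V) : Prop :=
  ∃ (k : ℕ) (S : ℕ → Finset V), S 0 = Finset.univ ∧ (S k).card = 1 ∧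
    ∀ i < k, G.BlockStep (S i) (S (i + 1))

end Multigraph

/-!
Every edge `uv` of a tree is a bridge, and the Laplacian of the indicator of the component of `u`
in `T - uv` is `ε_u - ε_v`. Chaining along paths, all `ε_u - ε_v` are principal, hence so is
every divisor of degree `0`: on a tree a divisor is L-effective exactly when its degree is
nonnegative. So `f - λ` is L-effective for every effective `λ` of degree `deg f`, while for
`λ = (deg f + 1) ε_v` it is not.
-/

namespace Multigraph

open Finset

section Divisors

variable {V : Type*}

theorem degree_sub [Fintype V] (f g : V → ℤ) : degree (f - g) = degree f - degree g :=
  sum_sub_distrib ..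

theorem degree_pi_single [Fintype V] [DecidableEq V] (v : V) (r : ℤ) :
    degree (Pi.single v r) = r := by
  simp [degree]

theorem effective_pi_single [DecidableEq V] {v : V} {r : ℤ} (hr : 0 ≤ r) :
    Effective (Pi.single v r) :=
  (Pi.single_nonneg (α := fun _ => ℤ)).2 hr

theorem mem_of_degree_eq_zero [Fintype V] [DecidableEq V] [Nonempty V]
    {H : AddSubgroup (V → ℤ)} (hH : ∀ u v, Pi.single u 1 - Pi.single v 1 ∈ H) {h : V → ℤ}
    (hh : degree h = 0) : h ∈ H := by
  obtain ⟨v₀⟩ := ‹Nonempty V›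
  have : h = ∑ v, h v • (Pi.single v 1 - Pi.single v₀ 1) := by
    simp only [smul_sub, sum_sub_distrib, ← sum_smul, show ∑ v, h v = 0 from hh, zero_smul,
      sub_zero]
    simp only [← Pi.single_smul', smul_eq_mul, mul_one, univ_sum_single]
  rw [this]
  exact sum_mem fun v _ => zsmul_mem (hH v v₀) _

end Divisors

variable {V : Type*} [Fintype V] [DecidableEq V]

def lapHom (G : Multigraph V) : (V → ℤ) →+ (V → ℤ) where
  toFun := G.lapApply
  map_zero' := by funext w; simp [lapApply]
  map_add' x y := by
    funext w
    simp only [lapApply, Pi.add_apply, add_mul, sum_add_distrib]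
    ring

@[simp]
theorem lapHom_apply (G : Multigraph V) (x : V → ℤ) : G.lapHom x = G.lapApply x := rfl

theorem lapApply_apply_eq_sum (G : Multigraph V) (x : V → ℤ) (w : V) :
    G.lapApply x w = ∑ z, (x w - x z) * G.e z w := by
  simp only [lapApply, vdeg, Nat.cast_sum, mul_sum, sub_mul, sum_sub_distrib, G.symm w]

theorem degree_lapApply (G : Multigraph V) (x : V → ℤ) : degree (G.lapApply x) = 0 := by
  simp only [degree, lapApply_apply_eq_sum, sub_mul, sum_sub_distrib]
  rw [sub_eq_zero, sum_comm]
  exact sum_congr rfl fun w _ => sum_congr rfl fun z _ => by rw [G.symm]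

theorem linEquiv_iff_sub_mem_range (G : Multigraph V) (f g : V → ℤ) :
    G.LinEquiv f g ↔ g - f ∈ G.lapHom.range := by
  simp only [LinEquiv, AddMonoidHom.mem_range, eq_sub_iff_add_eq', eq_comm (a := g)]
  rfl

theorem LEffective.degree_nonneg {G : Multigraph V} {f : V → ℤ} (hf : G.LEffective f) :
    0 ≤ degree f := by
  obtain ⟨g, hfg, hg⟩ := hf
  obtain ⟨x, hx⟩ := (G.linEquiv_iff_sub_mem_range f g).1 hfg
  calc 0 ≤ degree g := sum_nonneg fun v _ => hg v
    _ = degree f := by rw [← sub_eq_zero, ← degree_sub, ← hx]; exact G.degree_lapApply x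

theorem le_degree_of_forall_lEffective_sub [Nonempty V] {G : Multigraph V} {f : V → ℤ} {r : ℤ}
    (hr : 0 ≤ r) (h : ∀ l : V → ℤ, Effective l → degree l = r → G.LEffective (f - l)) :
    r ≤ degree f := by
  obtain ⟨v⟩ := ‹Nonempty V›
  have := (h (Pi.single v r) (effective_pi_single hr) (degree_pi_single v r)).degree_nonneg
  rwa [degree_sub, degree_pi_single, sub_nonneg] at this

theorem lapApply_indicator_of_cut (G : Multigraph V) (A : V → Prop) [DecidablePred A] {u v : V}
    (hu : A u) (hv : ¬ A v) (hcut : ∀ a b, A a → ¬ A b → G.e a b ≠ 0 → a = u ∧ b = v) :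
    G.lapApply (fun w => if A w then 1 else 0) =
      (G.e u v : ℤ) • (Pi.single u 1 - Pi.single v 1) := by
  funext w
  rw [lapApply_apply_eq_sum]
  by_cases hw : A w
  · have hwv : w ≠ v := by rintro rfl; exact hv hw
    rw [sum_eq_single v]
    · by_cases hwu : w = u
      · subst hwu; simp [hw, hv, hwv, G.symm w v]
      · have : G.e w v = 0 := by
          by_contra h; exact hwu (hcut w v hw hv h).1
        simp [hw, hv, hwu, hwv, G.symm v w, this]
    · intro z _ hzv
      by_cases hz : A z
      · simp [hw, hz]
      · have : G.e w z = 0 := by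
          by_contra h; exact hzv (hcut w z hw hz h).2
        simp [hw, hz, G.symm z w, this]
    · simp
  · have hwu : w ≠ u := by rintro rfl; exact hw hu
    rw [sum_eq_single u]
    · by_cases hwv : w = v
      · subst hwv; simp [hw, hu, hwu]
      · have : G.e u w = 0 := by
          by_contra h; exact hwv (hcut u w hu hw h).2
        simp [hw, hu, hwu, hwv, this]
    · intro z _ hzu
      by_cases hz : A z
      · have : G.e z w = 0 := by
          by_contra h; exact hzu (hcut z w hz hw h).1
        simp [this]
      · simp [hw, hz]
    · simp

namespace IsTree

variable {G : Multigraph V} (hT : G.IsTree)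
include hT

theorem single_sub_single_mem_range_of_adj {u v : V} (huv : G.toSimple.Adj u v) :
    Pi.single u 1 - Pi.single v 1 ∈ G.lapHom.range := by
  classical
  let G' := G.toSimple.deleteEdges {s(u, v)}
  have hbridge : ¬ G'.Reachable u v :=
    SimpleGraph.isAcyclic_iff_forall_adj_isBridge.1 hT.1.isAcyclic huv
  have hcut : ∀ a b, G'.Reachable u a → ¬ G'.Reachable u b → G.e a b ≠ 0 → a = u ∧ b = v := by
    intro a b ha hb hab
    have hedge : s(a, b) = s(u, v) := by
      by_contra hne
      have : G'.Adj a b := SimpleGraph.deleteEdges_adj.2 ⟨hab, by simpa using hne⟩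
      exact hb (ha.trans this.reachable)
    rcases Sym2.eq_iff.1 hedge with h | ⟨rfl, rfl⟩
    · exact h
    · exact absurd ha hbridge
  have he : G.e u v = 1 := by
    have : G.e u v ≠ 0 := huv
    have := hT.2 u v
    omega
  refine ⟨fun w => if G'.Reachable u w then 1 else 0, ?_⟩
  simpa [he] using G.lapApply_indicator_of_cut _ SimpleGraph.Reachable.rfl hbridge hcut

theorem single_sub_single_mem_range (u v : V) :
    Pi.single u 1 - Pi.single v 1 ∈ G.lapHom.range := by
  obtain ⟨p⟩ := hT.1.connected.preconnected u v
  induction p with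
  | nil => simp
  | cons hab _ ih => simpa using add_mem (single_sub_single_mem_range_of_adj hT hab) ih

theorem lEffective_iff {f : V → ℤ} : G.LEffective f ↔ 0 ≤ degree f := by
  refine ⟨LEffective.degree_nonneg, fun hf => ?_⟩
  obtain ⟨v⟩ := hT.1.connected.nonempty
  have : Nonempty V := ⟨v⟩
  refine ⟨Pi.single v (degree f), ?_, effective_pi_single hf⟩
  rw [linEquiv_iff_sub_mem_range]
  exact mem_of_degree_eq_zero (single_sub_single_mem_range hT)
    (by rw [degree_sub, degree_pi_single, sub_self])

end IsTree

end Multigraph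

open Multigraph

variable {V : Type*} [Fintype V] [DecidableEq V]

/-- on a tree, a divisor of nonnegative degree has rank equal
to its degree. -/
theorem rank_tree (G : Multigraph V) (hT : G.IsTree)
    (f : V → ℤ) (hdeg : 0 ≤ degree f) :
    G.rank f = degree f := by
  have : Nonempty V := hT.1.connected.nonempty
  refine IsGreatest.csSup_eq ⟨Or.inr ⟨hdeg, fun l _ hl => hT.lEffective_iff.2 ?_⟩, ?_⟩
  · rw [degree_sub, hl, sub_self]
  · rintro r (rfl | ⟨hr, h⟩)
    · linarith
    · exact le_degree_of_forall_lEffective_sub hr h
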